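/- Let K be a positive integer and let ℓ ∈ {1, 2}, and set s = 1/2 − 1/(4K + 2ℓ). Then the series defining f(s) converges with sum (1/4)·1/(1 − 2s) + (2 − ℓ)·(1 − 2s)/4; equivalently, this sum equals (2K + ℓ)/4 + (2 − ℓ)/(4(2K + ℓ)). -/

import Mathlib

/-!
With `N = 2K + ℓ` we have `s = 1/2 - 1/(2N)`. Putting `α = (2k+1)π/(2N)`, one has
`cos((2k+1)πs) = (-1)^k sin α`, and the telescoping identity
`sin α · ∑_{j<N} sin((2j+1)α) = sin²(Nα) = 1` turns `sec((2k+1)πs)` into the finite sum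
`(-1)^k ∑_{j<N} sin((2j+1)α)`. Exchanging the two sums, `f(s)` becomes the sum of the `N` values
at `x = (2j+1)π/(2N)` of the triangle wave
`(4/π²) ∑_k (-1)^k sin((2k+1)x)/(2k+1)² = min(x, π - x)/π`, which is the odd part of the Fourier
series of the Bernoulli polynomial `B₂`. This gives
`f(s) = ∑_{j<N} min(2j+1, 2N-2j-1)/(2N) = (N² + N mod 2)/(4N)`.
-/

open Real

/-- The `n`-th term (indexed from `0`, representing the positive integer `n+1`)
of the series defining the secant zeta function `ψ(r) = (4/π²) ∑_{n≥1} sec(nπr)/n²`. -/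
noncomputable def psiSeries (r : ℝ) : ℕ → ℝ :=
  fun n => (4 / π ^ 2) * (1 / Real.cos (((n : ℝ) + 1) * π * r)) / ((n : ℝ) + 1) ^ 2

/-- The `k`-th term of the series defining `f(r) = (4/π²) ∑_{k≥0} sec((2k+1)πr)/(2k+1)²`. -/
noncomputable def fSeries (r : ℝ) : ℕ → ℝ :=
  fun k => (4 / π ^ 2) * (1 / Real.cos ((2 * (k : ℝ) + 1) * π * r)) / (2 * (k : ℝ) + 1) ^ 2

open Finset

theorem cos_odd_mul_pi_div_two_sub (k : ℕ) (t : ℝ) :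
    cos ((2 * k + 1) * (π / 2) - t) = (-1) ^ k * sin t := by
  rw [show (2 * k + 1) * (π / 2) - t = (π / 2 - t) + k * π by ring, cos_add_nat_mul_pi,
    cos_pi_div_two_sub]

theorem hasSum_cos_div_sq {x : ℝ} (hx : x ∈ Set.Icc (0 : ℝ) 1) :
    HasSum (fun n : ℕ => cos (2 * π * n * x) / (n : ℝ) ^ 2) (π ^ 2 * (x ^ 2 - x + 1 / 6)) := by
  have hB₂ :
      (Polynomial.map (algebraMap ℚ ℝ) (Polynomial.bernoulli 2)).eval x = x ^ 2 - x + 1 / 6 := by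
    simp [Polynomial.bernoulli, sum_range_succ, bernoulli_eq_bernoulli'_of_ne_one, sub_eq_add_neg,
      add_comm]
  convert hasSum_one_div_nat_pow_mul_cos one_ne_zero hx using 1
  · ext n; ring
  · rw [mul_one, hB₂, Nat.factorial_two]
    ring

theorem hasSum_cos_odd_mul_div_sq {y : ℝ} (hy₀ : 0 ≤ y) (hy : y ≤ π) :
    HasSum (fun k : ℕ => cos ((2 * k + 1) * y) / (2 * k + 1) ^ 2) (π * (π - 2 * y) / 8) := by
  have hall : HasSum (fun n : ℕ => cos (n * y) / (n : ℝ) ^ 2)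
      (π ^ 2 * ((y / (2 * π)) ^ 2 - y / (2 * π) + 1 / 6)) :=
    (hasSum_cos_div_sq ⟨by positivity, by rw [div_le_one (by positivity)]; linarith [pi_pos]⟩
      ).congr_fun fun n => by rw [show 2 * π * n * (y / (2 * π)) = n * y by field_simp]
  have heven : HasSum (fun k : ℕ => cos (↑(2 * k) * y) / (↑(2 * k) : ℝ) ^ 2)
      (π ^ 2 * ((y / π) ^ 2 - y / π + 1 / 6) / 4) :=
    ((hasSum_cos_div_sq ⟨by positivity, (div_le_one pi_pos).2 hy⟩).div_const 4).congr_fun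
      fun k => by
        rw [show 2 * π * k * (y / π) = ↑(2 * k) * y by push_cast; field_simp]
        push_cast
        ring
  have hodd : HasSum (fun k : ℕ => cos (↑(2 * k + 1) * y) / (↑(2 * k + 1) : ℝ) ^ 2) _ :=
    (hall.summable.comp_injective (i := fun k : ℕ => 2 * k + 1)
      fun a b h => by simpa using h).hasSum
  have hsplit :=
    (HasSum.even_add_odd (f := fun n : ℕ => cos (n * y) / (n : ℝ) ^ 2) heven hodd).unique hall
  convert hodd using 1
  · ext k; push_cast; ring
  · field_simp at hsplit ⊢
    linarith

theorem hasSum_neg_one_pow_mul_sin_odd_mul_div_sq {x : ℝ} (hx₀ : 0 ≤ x) (hx : x ≤ π) :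
    HasSum (fun k : ℕ => (-1) ^ k * sin ((2 * k + 1) * x) / (2 * k + 1) ^ 2)
      (π / 4 * min x (π - x)) := by
  have hy : |π / 2 - x| ≤ π := abs_le.2 ⟨by linarith, by linarith [pi_pos]⟩
  have hmin : min x (π - x) = π / 2 - |π / 2 - x| := by
    rcases le_total x (π / 2) with h | h
    · rw [min_eq_left (by linarith), abs_of_nonneg (by linarith)]; ring
    · rw [min_eq_right (by linarith), abs_of_nonpos (by linarith)]; ring
  rw [hmin, show π / 4 * (π / 2 - |π / 2 - x|) = π * (π - 2 * |π / 2 - x|) / 8 by ring]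
  refine (hasSum_cos_odd_mul_div_sq (abs_nonneg _) hy).congr_fun fun k => ?_
  have hcos_abs : cos ((2 * k + 1) * |π / 2 - x|) = cos ((2 * k + 1) * (π / 2 - x)) := by
    rcases abs_choice (π / 2 - x) with h | h <;> simp only [h, mul_neg, cos_neg]
  rw [hcos_abs, mul_sub, cos_odd_mul_pi_div_two_sub]

theorem sin_mul_sum_sin_odd_mul (α : ℝ) (N : ℕ) :
    sin α * ∑ j ∈ range N, sin ((2 * j + 1) * α) = sin (N * α) ^ 2 := by
  induction N with
  | zero => simp
  | succ N ih =>
    rw [sum_range_succ, mul_add, ih]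
    push_cast
    rw [show (2 * (N : ℝ) + 1) * α = 2 * (N * α) + α by ring, add_mul, one_mul, sin_add, sin_add,
      sin_two_mul, cos_two_mul]
    linear_combination
      (-(sin (N * α)) ^ 2) * sin_sq_add_cos_sq α + sin α ^ 2 * sin_sq_add_cos_sq (N * α)

theorem one_div_cos_odd_mul_pi_mul_one_half_sub {N : ℕ} (hN : N ≠ 0) (k : ℕ) :
    1 / cos ((2 * k + 1) * π * (1 / 2 - 1 / (2 * N))) =
      (-1) ^ k * ∑ j ∈ range N, sin ((2 * j + 1) * ((2 * k + 1) * π / (2 * N))) := by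
  set α := (2 * k + 1) * π / (2 * N)
  have hcos : cos ((2 * k + 1) * π * (1 / 2 - 1 / (2 * N))) = (-1) ^ k * sin α := by
    rw [← cos_odd_mul_pi_div_two_sub]; congr 1; simp only [α]; field_simp
  have hsum : sin α * ∑ j ∈ range N, sin ((2 * j + 1) * α) = 1 := by
    have h := cos_odd_mul_pi_div_two_sub k 0
    rw [sin_zero, mul_zero, sub_zero] at h
    rw [sin_mul_sum_sin_odd_mul, sin_sq, show N * α = (2 * k + 1) * (π / 2) by
      simp only [α]; field_simp, h]
    ring
  rw [hcos, one_div, mul_inv, ← inv_pow, inv_neg_one, eq_inv_of_mul_eq_one_right hsum]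

theorem two_mul_sum_range_min_odd : ∀ N : ℕ,
    2 * ∑ j ∈ range N, min (2 * j + 1) (2 * N - (2 * j + 1)) = N ^ 2 + N % 2
  | 0 => rfl
  | 1 => rfl
  | N + 2 => by
    have ih := two_mul_sum_range_min_odd N
    -- dropping the first and last terms leaves the terms for `N`, each increased by `2`
    have hinner : ∀ i ∈ range N, min (2 * (i + 1) + 1) (2 * (N + 2) - (2 * (i + 1) + 1)) =
        min (2 * i + 1) (2 * N - (2 * i + 1)) + 2 := by
      intro i hi
      have := mem_range.1 hi
      omega
    rw [sum_range_succ, sum_range_succ', sum_congr rfl hinner, sum_add_distrib, sum_const,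
      card_range, smul_eq_mul]
    have hmod : (N + 2) % 2 = N % 2 := by omega
    have hlast : min (2 * (N + 1) + 1) (2 * (N + 2) - (2 * (N + 1) + 1)) = 1 := by omega
    have hfirst : min (2 * 0 + 1) (2 * (N + 2) - (2 * 0 + 1)) = 1 := by omega
    rw [hmod, hlast, hfirst]
    nlinarith

theorem hasSum_fSeries_one_half_sub {N : ℕ} (hN : N ≠ 0) :
    HasSum (fSeries (1 / 2 - 1 / (2 * N))) ((N ^ 2 + (N % 2 : ℕ)) / (4 * N)) := by
  have hterm : ∀ j ∈ range N, HasSum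
      (fun k : ℕ => 4 / π ^ 2 *
        ((-1) ^ k * sin ((2 * k + 1) * ((2 * j + 1) * π / (2 * N))) / (2 * k + 1) ^ 2))
      (((min (2 * j + 1) (2 * N - (2 * j + 1)) : ℕ) : ℝ) / (2 * N)) := by
    intro j hj
    have hjN : 2 * j + 1 ≤ 2 * N := by have := mem_range.1 hj; omega
    have hjN' : (2 * j + 1 : ℝ) ≤ 2 * N := by exact_mod_cast hjN
    have hval : ((min (2 * j + 1) (2 * N - (2 * j + 1)) : ℕ) : ℝ) / (2 * N) =
        4 / π ^ 2 * (π / 4 * min ((2 * j + 1) * π / (2 * N)) (π - (2 * j + 1) * π / (2 * N))) := by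
      rw [Nat.cast_min, Nat.cast_sub hjN, ← min_div_div_right (by positivity)]
      push_cast
      rw [show π - (2 * j + 1) * π / (2 * N) = (2 * N - (2 * j + 1)) / (2 * N) * π by field_simp,
        mul_div_right_comm, ← min_mul_of_nonneg _ _ pi_pos.le]
      field_simp
    rw [hval]
    exact (hasSum_neg_one_pow_mul_sin_odd_mul_div_sq (by positivity)
      ((div_le_iff₀ (by positivity)).2 (by nlinarith [pi_pos]))).mul_left _
  have hfun : fSeries (1 / 2 - 1 / (2 * N)) = fun k : ℕ => ∑ j ∈ range N, 4 / π ^ 2 *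
      ((-1) ^ k * sin ((2 * k + 1) * ((2 * j + 1) * π / (2 * N))) / (2 * k + 1) ^ 2) := by
    funext k
    rw [fSeries, one_div_cos_odd_mul_pi_mul_one_half_sub hN, mul_sum, mul_sum, sum_div]
    refine sum_congr rfl fun j _ => ?_
    rw [show (2 * j + 1) * ((2 * k + 1) * π / (2 * N)) = (2 * k + 1) * ((2 * j + 1) * π / (2 * N))
      by ring]
    ring
  have hcount : (2 : ℝ) * ∑ j ∈ range N, ((min (2 * j + 1) (2 * N - (2 * j + 1)) : ℕ) : ℝ) =
      N ^ 2 + (N % 2 : ℕ) := by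
    exact_mod_cast two_mul_sum_range_min_odd N
  rw [hfun]
  convert hasSum_sum hterm using 1
  rw [← sum_div]
  field_simp
  linarith

theorem f_near_one_half_general (K : ℕ) (ℓ : ℕ) (hℓ : ℓ = 1 ∨ ℓ = 2)
    (s : ℝ) (hs : s = 1 / 2 - 1 / (4 * (K : ℝ) + 2 * (ℓ : ℝ))) :
    HasSum (fSeries s) ((1 / 4) * (1 / (1 - 2 * s)) + (2 - (ℓ : ℝ)) * (1 - 2 * s) / 4) ∧
    (1 / 4) * (1 / (1 - 2 * s)) + (2 - (ℓ : ℝ)) * (1 - 2 * s) / 4 =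
      (2 * (K : ℝ) + (ℓ : ℝ)) / 4 + (2 - (ℓ : ℝ)) / (4 * (2 * (K : ℝ) + (ℓ : ℝ))) := by
  set N := 2 * K + ℓ
  have hN : N ≠ 0 := by omega
  have hNcast : (N : ℝ) = 2 * K + ℓ := by push_cast [N]; ring
  have hsN : s = 1 / 2 - 1 / (2 * N) := by rw [hs, hNcast]; ring
  have hmod : ((N % 2 : ℕ) : ℝ) = 2 - ℓ := by
    rcases hℓ with rfl | rfl <;> norm_num [N, Nat.add_mod]
  have hval : (1 / 4) * (1 / (1 - 2 * s)) + (2 - (ℓ : ℝ)) * (1 - 2 * s) / 4 =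
      (N ^ 2 + (N % 2 : ℕ)) / (4 * N) := by
    rw [hsN, hmod]
    field_simp
    ring
  refine ⟨hval ▸ hsN ▸ hasSum_fSeries_one_half_sub hN, ?_⟩
  rw [hval, hmod, hNcast]
  field_simp

theorem f_near_one_half (K : ℕ) (hK : 0 < K) (ℓ : ℕ) (hℓ : ℓ = 1 ∨ ℓ = 2)
    (s : ℝ) (hs : s = 1 / 2 - 1 / (4 * (K : ℝ) + 2 * (ℓ : ℝ))) :
    HasSum (fSeries s) ((1 / 4) * (1 / (1 - 2 * s)) + (2 - (ℓ : ℝ)) * (1 - 2 * s) / 4) ∧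
    (1 / 4) * (1 / (1 - 2 * s)) + (2 - (ℓ : ℝ)) * (1 - 2 * s) / 4 =
      (2 * (K : ℝ) + (ℓ : ℝ)) / 4 + (2 - (ℓ : ℝ)) / (4 * (2 * (K : ℝ) + (ℓ : ℝ))) :=
  f_near_one_half_general K ℓ hℓ s hs
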